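/- The linear map T : x ↦ α·p·x·η(p) on ℍ(K) (viewed as a 4-dimensional K-space, or the induced ℝ-linear map on ℝ^4) has trace α·N(tr(p)) and determinant α⁴·N(|p|⁴), where tr(p) = p + p̄ is the reduced trace, |p|² = p p̄ the reduced norm, and N(β) = ββ' the field norm of K = ℚ(√5). -/

import Mathlib

open Polynomial Quaternion

noncomputable section

set_option maxRecDepth 8000
set_option synthInstance.maxHeartbeats 1000000
set_option maxHeartbeats 1000000

def f5 : ℚ[X] := X ^ 2 - C 5

instance f5_irred : Fact (Irreducible f5) := ⟨by
  unfold f5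
  apply X_pow_sub_C_irreducible_of_prime Nat.prime_two
  intro b hb
  have h5 : Irrational (Real.sqrt 5) := (Nat.prime_five).irrational_sqrt
  have hb' : ((b : ℝ)) ^ 2 = 5 := by exact_mod_cast congrArg (fun q : ℚ => (q : ℝ)) hb
  have heq : Real.sqrt 5 = |(b : ℝ)| := by
    rw [← hb', Real.sqrt_sq_eq_abs]
  rw [heq] at h5
  exact h5 ⟨|b|, by push_cast; ring⟩⟩

abbrev K : Type := AdjoinRoot f5

instance : Field K := inferInstance
instance : SMul K (Quaternion K) := inferInstance
instance : Algebra K (Quaternion K) := inferInstance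

def sqrt5 : K := AdjoinRoot.root f5

lemma sqrt5_sq : sqrt5 ^ 2 = 5 := by
  have h : AdjoinRoot.mk f5 (X ^ 2 - C 5) = 0 := AdjoinRoot.mk_self
  rw [map_sub, map_pow, AdjoinRoot.mk_X, AdjoinRoot.mk_C, sub_eq_zero, map_ofNat] at h
  exact h

def conjK : K →+* K :=
  AdjoinRoot.lift (algebraMap ℚ K) (-sqrt5) (by
    simp only [f5, eval₂_sub, eval₂_pow, eval₂_X, eval₂_C, sub_eq_zero]
    have h : (-sqrt5) ^ 2 = sqrt5 ^ 2 := by ring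
    rw [h, sqrt5_sq]
    simp)

def τ : K := (1 + sqrt5) / 2

abbrev ℍK := Quaternion K

def twist (x : ℍK) : ℍK := ⟨conjK x.re, conjK x.imI, conjK x.imK, conjK x.imJ⟩

def icoB : Fin 4 → ℍK :=
  ![1, ⟨0,1,0,0⟩, ⟨1/2,1/2,1/2,1/2⟩, ⟨(1-τ)/2, τ/2, 0, 1/2⟩]

def Ico : AddSubgroup ℍK :=
  AddSubgroup.closure (Set.range icoB ∪ Set.range fun i => τ • icoB i)

def lB : Fin 4 → ℍK :=
  ![1, ⟨-(1/2),1/2,1/2,1/2⟩, ⟨0,-1,0,0⟩, ⟨0,1/2,(τ-1)/2,-(τ/2)⟩]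

def LatA4 : AddSubgroup ℍK := AddSubgroup.closure (Set.range lB)

def LatATau : AddSubgroup ℍK :=
  AddSubgroup.closure (Set.range lB ∪ Set.range fun i => τ • lB i)


/-- The K-linear map x ↦ α·p·x·η(p) on ℍ(K). -/
def simT (α : ℚ) (p : ℍK) : ℍK →ₗ[K] ℍK :=
  algebraMap ℚ K α • ((LinearMap.mulRight K (twist p)).comp (LinearMap.mulLeft K p))

/-! On `ℍ[R]` the map `x ↦ p * x * q` has trace `(2 re p) (2 re q)`, and left and right
multiplication by `p` both have determinant `normSq p ^ 2`. The twist `η` acts on `re` and on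
`normSq` as the Galois conjugation of `ℚ(√5)`. -/

namespace Quaternion

variable {R : Type*} [CommRing R]

noncomputable def basisOneIJK : Module.Basis (Fin 4) R ℍ[R] :=
  QuaternionAlgebra.basisOneIJK (-1) 0 (-1)

@[simp]
theorem basisOneIJK_repr (q : ℍ[R]) :
    basisOneIJK.repr q = ![q.re, q.imI, q.imJ, q.imK] := rfl

theorem basisOneIJK_eq (j : Fin 4) :
    (basisOneIJK j : ℍ[R]) = ![1, ⟨0, 1, 0, 0⟩, ⟨0, 0, 1, 0⟩, ⟨0, 0, 0, 1⟩] j := by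
  apply basisOneIJK.repr.injective
  rw [Module.Basis.repr_self]
  ext i
  rw [basisOneIJK_repr]
  fin_cases i <;> fin_cases j <;> simp

theorem trace_mulRight_comp_mulLeft (p q : ℍ[R]) :
    LinearMap.trace R ℍ[R] (LinearMap.mulRight R q ∘ₗ LinearMap.mulLeft R p) =
      4 * p.re * q.re := by
  rw [LinearMap.trace_eq_matrix_trace R basisOneIJK, Matrix.trace, Fin.sum_univ_four]
  simp only [Matrix.diag_apply, LinearMap.toMatrix_apply, LinearMap.comp_apply,
    LinearMap.mulLeft_apply, LinearMap.mulRight_apply, basisOneIJK_repr, re_mul, imI_mul, imJ_mul,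
    imK_mul]
  simp [basisOneIJK_eq]
  ring

theorem det_mulLeft (p : ℍ[R]) : LinearMap.det (LinearMap.mulLeft R p) = normSq p ^ 2 := by
  rw [← LinearMap.det_toMatrix basisOneIJK, Matrix.det_succ_row_zero]
  simp [Fin.sum_univ_succ, Fin.succAbove, Matrix.det_fin_three,
    Algebra.leftMulMatrix_eq_repr_mul, basisOneIJK_eq, normSq_def']
  ring

theorem det_mulRight (q : ℍ[R]) : LinearMap.det (LinearMap.mulRight R q) = normSq q ^ 2 := by
  rw [← LinearMap.det_toMatrix basisOneIJK, Matrix.det_succ_row_zero]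
  simp [Fin.sum_univ_succ, Fin.succAbove, Matrix.det_fin_three,
    LinearMap.toMatrix_apply, basisOneIJK_eq, normSq_def']
  ring

end Quaternion

theorem re_twist (x : ℍK) : (twist x).re = conjK x.re := rfl

theorem normSq_twist (x : ℍK) : normSq (twist x) = conjK (normSq x) := by
  rw [normSq_def', normSq_def']
  simp only [twist, map_add, map_pow]
  ring

/-- the map T : x ↦ α·p·x·η(p) has trace α·N(tr(p)) and
determinant α⁴·N(|p|⁴), where tr(p) = p + p̄, |p|² = nr(p) = p·p̄ and
N(β) = β·β' is the field norm of ℚ(√5). -/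
theorem trace_det_simT (α : ℚ) (p : ℍK) :
    LinearMap.trace K ℍK (simT α p) =
      algebraMap ℚ K α * ((p + star p).re * conjK ((p + star p).re)) ∧
    LinearMap.det (simT α p) =
      algebraMap ℚ K α ^ 4 * (normSq p ^ 2 * conjK (normSq p ^ 2)) := by
  have hre : (p + star p).re = 2 * p.re := by rw [re_add, re_star]; ring
  constructor
  · rw [simT, map_smul, trace_mulRight_comp_mulLeft, re_twist, hre, smul_eq_mul, map_mul, map_ofNat]
    ring
  · rw [simT, LinearMap.det_smul, finrank_eq_four, LinearMap.det_comp, det_mulRight,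
      det_mulLeft, normSq_twist, map_pow]
    ring
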